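/- Let d ≥ 1, μ ∈ ℝ^d, σ > 0, ε ≥ 0 and θ ∈ ℝ^d with θ ≠ 0. The ℓ∞-robust classification error with radius ε of the linear classifier f_θ(x) = sign(⟨θ,x⟩) for the conditional Gaussian model with mean μ and variance σ², namely PE^{∞,ε}(θ) = ½·N(μ, σ²I_d)({x : ∃δ, ‖δ‖_∞ ≤ ε and ⟨θ, x+δ⟩ ≤ 0}) + ½·N(−μ, σ²I_d)({x : ∃δ, ‖δ‖_∞ ≤ ε and ⟨θ, x+δ⟩ ≥ 0}), equals Φ((ε·‖θ‖₁ − ⟨θ, μ⟩)/(σ·‖θ‖₂)). -/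

import Mathlib

open MeasureTheory ProbabilityTheory
open scoped RealInnerProductSpace NNReal

/-- The multivariate Gaussian measure `N(m, v·I_d)` on `ℝ^d = EuclideanSpace ℝ (Fin d)`. -/
noncomputable def gaussN (d : ℕ) (m : EuclideanSpace ℝ (Fin d)) (v : ℝ≥0) :
    Measure (EuclideanSpace ℝ (Fin d)) :=
  (Measure.pi fun i => gaussianReal (m i) v).map
    (MeasurableEquiv.toLp 2 (Fin d → ℝ))

/-- The standard Gaussian cumulative distribution function `Φ`. -/
noncomputable def Phi (z : ℝ) : ℝ := (gaussianReal 0 1 (Set.Iic z)).toReal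

/-- The `ℓ¹` norm `‖x‖₁ = Σᵢ |xᵢ|` on `ℝ^d`. -/
noncomputable def l1norm {d : ℕ} (x : EuclideanSpace ℝ (Fin d)) : ℝ := ∑ i, |x i|

/-- The `ℓ∞` norm `‖x‖_∞ = maxᵢ |xᵢ|` on `ℝ^d`. -/
noncomputable def linfnorm {d : ℕ} (x : EuclideanSpace ℝ (Fin d)) : ℝ := ⨆ i, |x i|

/-!
Against an `ℓ∞` perturbation of size `ε` the adversary moves `⟪θ, x⟫` by at most `ε‖θ‖₁`
(Hölder), and exactly that much with `δ = ∓ε · sign θ`; so the two robust error events are the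
half-spaces `⟪θ, x⟫ ≤ ε‖θ‖₁` and `⟪θ, x⟫ ≥ -ε‖θ‖₁`. Under `N(m, vI)` the projection `⟪θ, x⟫` is
the real Gaussian `N(⟪θ, m⟫, ‖θ‖²v)`, as the characteristic functions show, and after
standardizing both half-spaces have probability `Φ((ε‖θ‖₁ - ⟪θ, μ⟫)/(σ‖θ‖))`.
-/

lemma charFun_map_inner {E : Type*} [NormedAddCommGroup E] [InnerProductSpace ℝ E]
    [MeasurableSpace E] [BorelSpace E] (ν : Measure E) (θ : E) (u : ℝ) :
    charFun (ν.map (⟪θ, ·⟫)) u = charFun ν (u • θ) := by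
  rw [charFun_apply, charFun_apply, integral_map (by fun_prop) (by fun_prop)]
  simp_rw [inner_smul_right, real_inner_comm θ, RCLike.inner_apply, conj_trivial]

lemma gaussianReal_map_standardize (m : ℝ) {v : ℝ≥0} (hv : v ≠ 0) :
    (gaussianReal m v).map (fun x => (x - m) / √v) = gaussianReal 0 1 := by
  rw [show (fun x => (x - m) / √v) = (· / √v) ∘ (· - m) from rfl,
    ← Measure.map_map (by fun_prop) (by fun_prop), gaussianReal_map_sub_const,
    gaussianReal_map_div_const, sub_self, zero_div]
  congr
  ext
  simp [Real.sq_sqrt, hv]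

lemma gaussianReal_Iic_toReal (m : ℝ) {v : ℝ≥0} (hv : v ≠ 0) (c : ℝ) :
    (gaussianReal m v (Set.Iic c)).toReal = Phi ((c - m) / √v) := by
  have hsqrt : 0 < √(v : ℝ) := Real.sqrt_pos.mpr (NNReal.coe_pos.mpr (pos_iff_ne_zero.mpr hv))
  have hpre : (fun x => (x - m) / √v) ⁻¹' Set.Iic ((c - m) / √v) = Set.Iic c := by
    ext x
    simp [div_le_div_iff_of_pos_right hsqrt]
  rw [Phi, ← gaussianReal_map_standardize m hv, Measure.map_apply (by fun_prop) measurableSet_Iic,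
    hpre]

open Complex in
lemma charFun_gaussN (d : ℕ) (m : EuclideanSpace ℝ (Fin d)) (v : ℝ≥0)
    (t : EuclideanSpace ℝ (Fin d)) :
    charFun (gaussN d m v) t = cexp (⟪t, m⟫ * I - (v * ‖t‖ ^ 2 / 2 : ℝ)) := by
  rw [gaussN, MeasurableEquiv.coe_toLp, charFun_pi]
  simp_rw [charFun_gaussianReal, ← Complex.exp_sum, EuclideanSpace.real_norm_sq_eq,
    PiLp.inner_apply, RCLike.inner_apply, conj_trivial, Finset.mul_sum, Finset.sum_div]
  push_cast
  rw [Finset.sum_sub_distrib, Finset.sum_mul]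
  simp_rw [mul_comm (m _ : ℂ)]

instance (d : ℕ) (m : EuclideanSpace ℝ (Fin d)) (v : ℝ≥0) :
    IsProbabilityMeasure (gaussN d m v) :=
  Measure.isProbabilityMeasure_map (by fun_prop)

lemma gaussN_map_inner (d : ℕ) (m : EuclideanSpace ℝ (Fin d)) (v : ℝ≥0)
    (θ : EuclideanSpace ℝ (Fin d)) :
    (gaussN d m v).map (⟪θ, ·⟫) = gaussianReal ⟪θ, m⟫ (‖θ‖₊ ^ 2 * v) := by
  refine Measure.ext_of_charFun (funext fun u => ?_)
  rw [charFun_map_inner, charFun_gaussN, charFun_gaussianReal, real_inner_smul_left, norm_smul,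
    Real.norm_eq_abs, mul_pow, sq_abs]
  push_cast
  ring_nf

lemma gaussN_setOf_inner_le_toReal {d : ℕ} (m : EuclideanSpace ℝ (Fin d)) {v : ℝ≥0} (hv : v ≠ 0)
    {θ : EuclideanSpace ℝ (Fin d)} (hθ : θ ≠ 0) (c : ℝ) :
    (gaussN d m v {x | ⟪θ, x⟫ ≤ c}).toReal = Phi ((c - ⟪θ, m⟫) / (√v * ‖θ‖)) := by
  have hV : ‖θ‖₊ ^ 2 * v ≠ 0 := mul_ne_zero (pow_ne_zero _ (nnnorm_ne_zero_iff.mpr hθ)) hv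
  rw [show {x | ⟪θ, x⟫ ≤ c} = (⟪θ, ·⟫) ⁻¹' Set.Iic c from rfl,
    ← Measure.map_apply (by fun_prop) measurableSet_Iic, gaussN_map_inner,
    gaussianReal_Iic_toReal _ hV]
  push_cast
  rw [Real.sqrt_mul (by positivity), Real.sqrt_sq (norm_nonneg θ), mul_comm ‖θ‖]

lemma gaussN_setOf_le_inner_toReal {d : ℕ} (m : EuclideanSpace ℝ (Fin d)) {v : ℝ≥0} (hv : v ≠ 0)
    {θ : EuclideanSpace ℝ (Fin d)} (hθ : θ ≠ 0) (c : ℝ) :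
    (gaussN d m v {x | c ≤ ⟪θ, x⟫}).toReal = Phi ((⟪θ, m⟫ - c) / (√v * ‖θ‖)) := by
  have h := gaussN_setOf_inner_le_toReal m hv (neg_ne_zero.mpr hθ) (-c)
  simp only [inner_neg_left, neg_le_neg_iff, norm_neg] at h
  rw [h]
  ring_nf

lemma abs_inner_le_of_linfnorm_le {d : ℕ} (θ : EuclideanSpace ℝ (Fin d))
    {δ : EuclideanSpace ℝ (Fin d)} {ε : ℝ} (hδ : linfnorm δ ≤ ε) :
    |⟪θ, δ⟫| ≤ ε * l1norm θ := by
  have hδi (i : Fin d) : |δ i| ≤ ε :=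
    (le_ciSup (Set.finite_range fun j => |δ j|).bddAbove i).trans hδ
  calc |⟪θ, δ⟫| = |∑ i, θ i * δ i| := by simp [PiLp.inner_apply, mul_comm]
    _ ≤ ∑ i, |θ i| * |δ i| := by
      simpa only [abs_mul] using Finset.abs_sum_le_sum_abs (fun i => θ i * δ i) Finset.univ
    _ ≤ ∑ i, |θ i| * ε := by gcongr with i; exact hδi i
    _ = ε * l1norm θ := by rw [l1norm, ← Finset.sum_mul, mul_comm]

lemma exists_linfnorm_le_inner_eq_neg {d : ℕ} (θ : EuclideanSpace ℝ (Fin d)) {ε : ℝ}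
    (hε : 0 ≤ ε) : ∃ δ : EuclideanSpace ℝ (Fin d), linfnorm δ ≤ ε ∧ ⟪θ, δ⟫ = -(ε * l1norm θ) := by
  refine ⟨WithLp.toLp 2 fun i => -(ε * SignType.sign (θ i)), Real.iSup_le (fun i => ?_) hε, ?_⟩
  · rcases lt_trichotomy (θ i) 0 with h | h | h <;> simp [h, abs_of_nonneg hε, hε]
  · simp [PiLp.inner_apply, l1norm, Finset.mul_sum, mul_assoc, sign_mul_self]

lemma setOf_exists_inner_add_nonpos_eq {d : ℕ} (θ : EuclideanSpace ℝ (Fin d)) {ε : ℝ}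
    (hε : 0 ≤ ε) :
    {x | ∃ δ : EuclideanSpace ℝ (Fin d), linfnorm δ ≤ ε ∧ ⟪θ, x + δ⟫ ≤ 0}
      = {x | ⟪θ, x⟫ ≤ ε * l1norm θ} := by
  ext x
  simp only [Set.mem_ofPred_eq, inner_add_right]
  constructor
  · rintro ⟨δ, hδ, hx⟩
    linarith [neg_abs_le ⟪θ, δ⟫, abs_inner_le_of_linfnorm_le θ hδ]
  · intro hx
    obtain ⟨δ, hδ, hθδ⟩ := exists_linfnorm_le_inner_eq_neg θ hε
    exact ⟨δ, hδ, by linarith⟩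

lemma setOf_exists_inner_add_nonneg_eq {d : ℕ} (θ : EuclideanSpace ℝ (Fin d)) {ε : ℝ}
    (hε : 0 ≤ ε) :
    {x | ∃ δ : EuclideanSpace ℝ (Fin d), linfnorm δ ≤ ε ∧ 0 ≤ ⟪θ, x + δ⟫}
      = {x | -(ε * l1norm θ) ≤ ⟪θ, x⟫} := by
  have h := setOf_exists_inner_add_nonpos_eq (-θ) hε
  simp only [inner_neg_left, neg_nonpos, l1norm, PiLp.neg_apply, abs_neg] at h
  simpa only [l1norm, neg_le] using h

theorem stmt11_general (d : ℕ) (μ : EuclideanSpace ℝ (Fin d)) (σ : ℝ) (hσ : 0 < σ)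
    (ε : ℝ) (hε : 0 ≤ ε) (θ : EuclideanSpace ℝ (Fin d)) (hθ : θ ≠ 0) :
    1 / 2 * (gaussN d μ ⟨σ ^ 2, sq_nonneg σ⟩
        {x | ∃ δ : EuclideanSpace ℝ (Fin d), linfnorm δ ≤ ε ∧ ⟪θ, x + δ⟫ ≤ 0}).toReal
      + 1 / 2 * (gaussN d (-μ) ⟨σ ^ 2, sq_nonneg σ⟩
          {x | ∃ δ : EuclideanSpace ℝ (Fin d), linfnorm δ ≤ ε ∧ 0 ≤ ⟪θ, x + δ⟫}).toReal
      = Phi ((ε * l1norm θ - ⟪θ, μ⟫) / (σ * ‖θ‖)) := by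
  set v : ℝ≥0 := ⟨σ ^ 2, sq_nonneg σ⟩
  have hsqrt : √(v : ℝ) = σ := Real.sqrt_sq hσ.le
  have hv : v ≠ 0 := fun h => hσ.ne' (by simpa [h] using hsqrt.symm)
  rw [setOf_exists_inner_add_nonpos_eq θ hε, setOf_exists_inner_add_nonneg_eq θ hε,
    gaussN_setOf_inner_le_toReal μ hv hθ, gaussN_setOf_le_inner_toReal (-μ) hv hθ,
    inner_neg_right, hsqrt]
  ring_nf

/-- The `ℓ∞`-robust classification error with radius `ε` of
`f_θ(x) = sign(⟨θ,x⟩)` under the conditional Gaussian model `x|y ∼ N(yμ, σ²I_d)` equals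
`Φ((ε‖θ‖₁ − ⟨θ,μ⟩)/(σ‖θ‖₂))`. -/
theorem stmt11 (d : ℕ) (hd : 1 ≤ d) (μ : EuclideanSpace ℝ (Fin d)) (σ : ℝ) (hσ : 0 < σ)
    (ε : ℝ) (hε : 0 ≤ ε) (θ : EuclideanSpace ℝ (Fin d)) (hθ : θ ≠ 0) :
    1 / 2 * (gaussN d μ ⟨σ ^ 2, sq_nonneg σ⟩
        {x | ∃ δ : EuclideanSpace ℝ (Fin d), linfnorm δ ≤ ε ∧ ⟪θ, x + δ⟫ ≤ 0}).toReal
      + 1 / 2 * (gaussN d (-μ) ⟨σ ^ 2, sq_nonneg σ⟩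
          {x | ∃ δ : EuclideanSpace ℝ (Fin d), linfnorm δ ≤ ε ∧ 0 ≤ ⟪θ, x + δ⟫}).toReal
      = Phi ((ε * l1norm θ - ⟪θ, μ⟫) / (σ * ‖θ‖)) :=
  stmt11_general d μ σ hσ ε hε θ hθ
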